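/- Let G be a finite connected graph and let (T, {V_t}_{t ∈ V(T)}) be a tree decomposition of G. Then there exists a node t ∈ V(T) such that the bag V_t is a longest path transversal of G, i.e., every longest path of G contains a vertex of V_t. -/

import Mathlib

open SimpleGraph

/-- `p` is a longest path of `G`: it is a path, and no path of `G` is longer. -/
def IsLongestPath {V : Type*} (G : SimpleGraph V) {u v : V} (p : G.Walk u v) : Prop :=
  p.IsPath ∧ ∀ ⦃a b : V⦄ (q : G.Walk a b), q.IsPath → q.length ≤ p.length

/-- A tree decomposition of `G` over a tree `T`: every vertex lies in some bag, every
edge is contained in some bag, and for every vertex the set of tree nodes whose bag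
contains it induces a connected subgraph of `T`. -/
structure TreeDecomp {V ι : Type*} (G : SimpleGraph V) (T : SimpleGraph ι) where
  isTree : T.IsTree
  bag : ι → Finset V
  bag_cover : ∀ v : V, ∃ t, v ∈ bag t
  bag_edge : ∀ ⦃u v : V⦄, G.Adj u v → ∃ t, u ∈ bag t ∧ v ∈ bag t
  bag_conn : ∀ v : V, (T.induce {t | v ∈ bag t}).Preconnected

/-!
Two longest paths `P`, `Q` of a connected graph must meet: otherwise a path `R` joining them and
meeting each only at its ends, together with the longer half of `P` and the longer half of `Q`,
forms a path longer than `P`. For any walk `p` the nodes of `T` whose bags meet `p` form a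
subtree, and by the previous remark the subtrees of two longest paths intersect. Subtrees of a
tree contain every path between their nodes, and such path-convex sets of a connected graph have
the Helly property (reduce to three sets, then replace each set by its intersection with a fixed
one), so some node of `T` lies in all these subtrees.
-/

namespace SimpleGraph

variable {V : Type*} {G : SimpleGraph V}

namespace Walk

theorem IsPath.append {a b c : V} {p : G.Walk a b} {q : G.Walk b c}
    (hp : p.IsPath) (hq : q.IsPath) (h : ∀ x ∈ p.support, x ∈ q.support → x = b) :
    (p.append q).IsPath := by
  refine IsPath.mk' ?_
  rw [support_append]
  refine hp.support_nodup.append hq.support_nodup.tail fun x hxp hxq => ?_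
  obtain rfl := h x hxp (List.mem_of_mem_tail hxq)
  have hnd := hq.support_nodup
  rw [← q.cons_tail_support] at hnd
  exact (List.nodup_cons.mp hnd).1 hxq

theorem IsPath.exists_isPath_half {u v x : V} {P : G.Walk u v} (hP : P.IsPath)
    (hx : x ∈ P.support) :
    ∃ (w : V) (A : G.Walk x w),
      A.IsPath ∧ A.support ⊆ P.support ∧ P.length ≤ 2 * A.length := by
  classical
  have hsplit : (P.takeUntil x hx).length + (P.dropUntil x hx).length = P.length := by
    rw [← length_append, take_spec]
  by_cases hc : (P.dropUntil x hx).length ≤ (P.takeUntil x hx).length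
  · refine ⟨u, (P.takeUntil x hx).reverse, (hP.takeUntil hx).reverse, ?_, ?_⟩
    · rw [support_reverse]
      exact fun z hz => P.support_takeUntil_subset_support hx (List.mem_reverse.mp hz)
    · rw [length_reverse]; omega
  · exact ⟨v, P.dropUntil x hx, hP.dropUntil hx, P.support_dropUntil_subset_support hx,
      by omega⟩

end Walk

theorem Connected.exists_isPath_between_finsets (hG : G.Connected) {S S' : Finset V}
    (hS : S.Nonempty) (hS' : S'.Nonempty) :
    ∃ x ∈ S, ∃ y ∈ S', ∃ R : G.Walk x y, R.IsPath ∧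
      (∀ z ∈ R.support, z ∈ S → z = x) ∧ (∀ z ∈ R.support, z ∈ S' → z = y) := by
  classical
  obtain ⟨s, hs⟩ := hS
  obtain ⟨s', hs'⟩ := hS'
  obtain ⟨W, hW⟩ := hG.exists_isPath s s'
  obtain ⟨y, hyS', hyW, hy⟩ := W.exists_mem_support_forall_mem_support_imp_eq S'
    ⟨s', by simp [hs']⟩
  set W₁ := (W.takeUntil y hyW).reverse
  obtain ⟨x, hxS, hxW₁, hx⟩ := W₁.exists_mem_support_forall_mem_support_imp_eq S
    ⟨s, by simp [W₁, hs]⟩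
  refine ⟨x, hxS, y, hyS', (W₁.takeUntil x hxW₁).reverse,
    ((hW.takeUntil hyW).reverse.takeUntil hxW₁).reverse,
    fun z hz hzS => hx z hzS (by simpa using hz), fun z hz hzS' => hy z hzS' ?_⟩
  rw [Walk.support_reverse, List.mem_reverse] at hz
  simpa [W₁] using W₁.support_takeUntil_subset_support hxW₁ hz

def PathConvex (G : SimpleGraph V) (s : Set V) : Prop :=
  ∀ ⦃a b : V⦄ (p : G.Walk a b), p.IsPath → a ∈ s → b ∈ s → ∀ x ∈ p.support, x ∈ s

theorem PathConvex.inter {s t : Set V} (hs : G.PathConvex s) (ht : G.PathConvex t) :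
    G.PathConvex (s ∩ t) :=
  fun _ _ p hp ha hb x hx => ⟨hs p hp ha.1 hb.1 x hx, ht p hp ha.2 hb.2 x hx⟩

theorem IsAcyclic.pathConvex_of_preconnected_induce (hG : G.IsAcyclic) {s : Set V}
    (hs : (G.induce s).Preconnected) : G.PathConvex s := by
  classical
  intro a b p hp ha hb x hx
  obtain ⟨w⟩ := hs ⟨a, ha⟩ ⟨b, hb⟩
  let w' : G.Walk a b := w.map (Embedding.induce s).toHom
  have hpw : p = w'.toPath :=
    congrArg Subtype.val ((hG.subsingleton_path a b).elim ⟨p, hp⟩ w'.toPath)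
  rw [hpw] at hx
  obtain ⟨y, -, rfl⟩ := List.mem_map.mp (w.support_map _ ▸ w'.support_toPath_subset_support hx)
  exact y.2

theorem Connected.inter_inter_nonempty_of_pathConvex (hG : G.Connected) {A B C : Set V}
    (hA : G.PathConvex A) (hB : G.PathConvex B) (hC : G.PathConvex C)
    (hAB : (A ∩ B).Nonempty) (hBC : (B ∩ C).Nonempty) (hCA : (C ∩ A).Nonempty) :
    (A ∩ B ∩ C).Nonempty := by
  classical
  obtain ⟨c, hcA, hcB⟩ := hAB
  obtain ⟨a, haB, haC⟩ := hBC
  obtain ⟨b, hbC, hbA⟩ := hCA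
  obtain ⟨p, hp⟩ := hG.exists_isPath c a
  obtain ⟨q, hq⟩ := hG.exists_isPath b c
  obtain ⟨m, hmp, hmq, hfirst⟩ :=
    q.exists_mem_support_forall_mem_support_imp_eq p.support.toFinset ⟨c, by simp⟩
  rw [List.mem_toFinset] at hmp
  -- `m` is the first vertex of `q` on `p`, so `q` up to `m` followed by `p` from `m` is a path
  have hqp : ((q.takeUntil m hmq).append (p.dropUntil m hmp)).IsPath :=
    (hq.takeUntil hmq).append (hp.dropUntil hmp) fun x hxq hxp =>
      hfirst x (List.mem_toFinset.mpr (p.support_dropUntil_subset_support hmp hxp)) hxq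
  refine ⟨m, ⟨hA q hq hbA hcA m hmq, hB p hp hcB haB m hmp⟩, hC _ hqp hbC haC m ?_⟩
  exact (Walk.mem_support_append_iff _ _).mpr (Or.inl (Walk.end_mem_support _))

theorem Connected.exists_forall_mem_of_pathConvex {κ : Type*} (hG : G.Connected)
    (J : Finset κ) (f : κ → Set V) (hconv : ∀ j ∈ J, G.PathConvex (f j))
    (hpair : ∀ i ∈ J, ∀ j ∈ J, (f i ∩ f j).Nonempty) :
    ∃ x, ∀ j ∈ J, x ∈ f j := by
  classical
  induction J using Finset.induction_on generalizing f with
  | empty => exact ⟨hG.nonempty.some, by simp⟩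
  | insert a J _ ih =>
    simp only [Finset.mem_insert, forall_eq_or_imp] at hconv hpair ⊢
    rcases J.eq_empty_or_nonempty with rfl | ⟨j₀, hj₀⟩
    · obtain ⟨x, hx, -⟩ := hpair.1.1
      exact ⟨x, hx, by simp⟩
    obtain ⟨x, hx⟩ := ih (fun j => f a ∩ f j) (fun j hj => hconv.1.inter (hconv.2 j hj))
      fun i hi j hj => by
        obtain ⟨x, ⟨hxa, hxi⟩, hxj⟩ := hG.inter_inter_nonempty_of_pathConvex hconv.1
          (hconv.2 i hi) (hconv.2 j hj) (hpair.1.2 i hi) (hpair.2 i hi |>.2 j hj)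
          (Set.inter_comm _ _ ▸ hpair.1.2 j hj)
        exact ⟨x, ⟨hxa, hxi⟩, hxa, hxj⟩
    exact ⟨x, (hx j₀ hj₀).1, fun j hj => (hx j hj).2⟩

end SimpleGraph

theorem IsLongestPath.exists_mem_support_mem_support {V : Type*} {G : SimpleGraph V}
    (hG : G.Connected) {u v a b : V} {P : G.Walk u v} {Q : G.Walk a b}
    (hP : IsLongestPath G P) (hQ : IsLongestPath G Q) :
    ∃ z, z ∈ P.support ∧ z ∈ Q.support := by
  classical
  by_contra! hdisj
  obtain ⟨x, hx, y, hy, R, hR, hRP, hRQ⟩ := hG.exists_isPath_between_finsets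
    (S := P.support.toFinset) (S' := Q.support.toFinset) ⟨u, by simp⟩ ⟨a, by simp⟩
  simp only [List.mem_toFinset] at hx hy hRP hRQ
  obtain ⟨_, A, hA, hAP, hAlen⟩ := hP.1.exists_isPath_half hx
  obtain ⟨_, B, hB, hBQ, hBlen⟩ := hQ.1.exists_isPath_half hy
  have hRB : (R.append B).IsPath := hR.append hB fun z hzR hzB => hRQ z hzR (hBQ hzB)
  have hARB : (A.reverse.append (R.append B)).IsPath := by
    refine hA.reverse.append hRB fun z hzA hzRB => ?_
    have hzP : z ∈ P.support := hAP (by simpa using hzA)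
    rcases (Walk.mem_support_append_iff _ _).mp hzRB with hzR | hzB
    · exact hRP z hzR hzP
    · exact absurd (hBQ hzB) (hdisj z hzP)
  have hR : 0 < R.length := by
    refine Nat.pos_of_ne_zero fun h => hdisj x hx ?_
    rwa [Walk.eq_of_length_eq_zero h]
  have hPARB := hP.2 _ hARB
  have hQP := hQ.2 _ hP.1
  simp only [Walk.length_append, Walk.length_reverse] at hPARB
  omega

namespace TreeDecomp

variable {V ι : Type*} {G : SimpleGraph V} {T : SimpleGraph ι} (D : TreeDecomp G T)

def walkNodes {u v : V} (p : G.Walk u v) : Set ι :=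
  {t | ∃ x ∈ D.bag t, x ∈ p.support}

theorem preconnected_induce_walkNodes {u v : V} (p : G.Walk u v) :
    (T.induce (D.walkNodes p)).Preconnected := by
  induction p with
  | @nil u =>
    have hnodes : D.walkNodes (.nil : G.Walk u u) = {t | u ∈ D.bag t} := by
      ext t
      simp [walkNodes]
    exact hnodes ▸ D.bag_conn u
  | @cons u w _ hadj p ih =>
    obtain ⟨t, htu, htw⟩ := D.bag_edge hadj
    have hnodes : D.walkNodes (.cons hadj p) = {t | u ∈ D.bag t} ∪ D.walkNodes p := by
      ext t
      simp only [walkNodes, Walk.support_cons, List.mem_cons, Set.mem_union, Set.mem_ofPred_eq]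
      grind
    rw [hnodes]
    exact (induce_union_connected (D.bag_conn u) ih
      ⟨t, htu, w, htw, p.start_mem_support⟩).preconnected

theorem pathConvex_walkNodes {u v : V} (p : G.Walk u v) : T.PathConvex (D.walkNodes p) :=
  D.isTree.isAcyclic.pathConvex_of_preconnected_induce (D.preconnected_induce_walkNodes p)

end TreeDecomp

theorem exists_bag_transversal_general {V ι : Type*} [Fintype ι]
    (G : SimpleGraph V) (T : SimpleGraph ι) (hconn : G.Connected)
    (D : TreeDecomp G T) :
    ∃ t : ι, ∀ ⦃u v : V⦄ (p : G.Walk u v), IsLongestPath G p →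
      ∃ x ∈ D.bag t, x ∈ p.support := by
  let F : Set (Set ι) :=
    {s | ∃ (u v : V) (p : G.Walk u v), IsLongestPath G p ∧ D.walkNodes p = s}
  have hF := F.toFinite
  obtain ⟨t, ht⟩ := D.isTree.connected.exists_forall_mem_of_pathConvex hF.toFinset id
    (by
      rintro _ hs
      obtain ⟨u, v, p, -, rfl⟩ := hF.mem_toFinset.mp hs
      exact D.pathConvex_walkNodes p)
    (by
      rintro _ hs _ hs'
      obtain ⟨u, v, p, hp, rfl⟩ := hF.mem_toFinset.mp hs
      obtain ⟨u', v', q, hq, rfl⟩ := hF.mem_toFinset.mp hs'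
      obtain ⟨z, hzp, hzq⟩ := hp.exists_mem_support_mem_support hconn hq
      obtain ⟨t, hzt⟩ := D.bag_cover z
      exact ⟨t, ⟨z, hzt, hzp⟩, z, hzt, hzq⟩)
  exact ⟨t, fun u v p hp => ht _ (hF.mem_toFinset.mpr ⟨u, v, p, hp, rfl⟩)⟩

/-- For any tree decomposition of a finite connected graph `G`, some bag is a longest
path transversal of `G`. -/
theorem exists_bag_transversal {V ι : Type*} [Fintype V] [Fintype ι]
    (G : SimpleGraph V) (T : SimpleGraph ι) (hconn : G.Connected)
    (D : TreeDecomp G T) :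
    ∃ t : ι, ∀ ⦃u v : V⦄ (p : G.Walk u v), IsLongestPath G p →
      ∃ x ∈ D.bag t, x ∈ p.support :=
  exists_bag_transversal_general G T hconn D
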